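/- Let k be a field, S a finite-dimensional split k-algebra, and R a subalgebra of S. Then R is a constrained subalgebra of S if and only if there exists a finite-dimensional left S-module M, with representation ρ: S → End_k(M), such that every s ∈ S with ρ(s) ∈ [R, End_k(M)] (the span of all ρ(r)φ − φρ(r), r ∈ R, φ ∈ End_k(M)) lies in [R,S]. -/

import Mathlib

/-!
Under the nondegenerate trace form `(θ, φ) ↦ tr(θφ)` on `End_k(V)`, the orthogonal of
`[R, End_k(V)]` is the commutant `End_R(V)`. Hence `ρ(s) ∈ [R, End_k(V)]` iff `χ_θ(s) = 0` for
every `θ ∈ End_R(V)`, so the condition on `V` says that the common kernel of `C₀(S,R;V)` lies in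
`[R,S]`, i.e. by duality that `C(S,R) ⊆ C₀(S,R;V)`. Since always `C₀(S,R) ⊆ C(S,R)`, it remains to
note that the finite-dimensional space `C₀(S,R)` is spanned by twisted traces on finitely many
modules, and all of them are twisted traces on the direct product of those modules.
-/

open TensorProduct

namespace Paper

variable (k S : Type*) [Field k] [Ring S] [Algebra k S]

/-- The `k`-linear span of all commutators `x*y - y*x` in `S`; denoted `[S,S]` in the paper. -/
def commutatorSpan : Submodule k S :=
  Submodule.span k {x : S | ∃ a b : S, x = a * b - b * a}

/-- `S` is (radically) constrained if its Jacobson radical is contained in `[S,S]`. -/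
def IsConstrained : Prop :=
  ((⊥ : Ideal S).jacobson : Set S) ⊆ (commutatorSpan k S : Set S)

/-- `S` is split if every endomorphism of a simple left `S`-module is a scalar. -/
def IsSplitAlgebra : Prop :=
  ∀ (L : Type) [AddCommGroup L] [Module S L], IsSimpleModule S L →
    ∀ f : L →ₗ[S] L, ∃ c : k, ∀ x : L, f x = algebraMap k S c • x

/-- A bundled finite-dimensional left `S`-module (with its underlying `k`-structure). -/
structure FDModule where
  V : Type
  [addCommGroup : AddCommGroup V]
  [modk : Module k V]
  [modS : Module S V]
  [tower : IsScalarTower k S V]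
  [scomm : SMulCommClass S k V]
  [fd : FiniteDimensional k V]

attribute [instance] FDModule.addCommGroup FDModule.modk FDModule.modS FDModule.tower
  FDModule.scomm FDModule.fd

variable (M : Type*) [AddCommGroup M] [Module k M] [Module S M] [IsScalarTower k S M]
  [SMulCommClass S k M]

/-- The twisted trace function `χ_θ ∈ S*`, `χ_θ(s) = trace (θ ∘ ρ(s))`, where `ρ` is the
representation of `S` on `M`. -/
noncomputable def twCharOf (θ : M →ₗ[k] M) : Module.Dual k S :=
  (LinearMap.trace k M).comp
    ((LinearMap.llcomp k M M M θ).comp (Algebra.lsmul k k M).toLinearMap)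

variable {k S}

/-- The twisted trace function of a bundled module. -/
noncomputable def twChar (N : FDModule k S) (θ : N.V →ₗ[k] N.V) : Module.Dual k S :=
  twCharOf k S N.V θ

/-- The natural character `χ_V ∈ S*` of a finite-dimensional module. -/
noncomputable def natChar (N : FDModule k S) : Module.Dual k S :=
  twChar N LinearMap.id

variable (k S)

/-- `C₀(S)`: the span of the natural characters of all finite-dimensional `S`-modules. -/
noncomputable def charSpan : Submodule k (Module.Dual k S) :=
  Submodule.span k (Set.range fun N : FDModule k S => natChar N)

end Paper

namespace Paper

variable (k S : Type*) [Field k] [Ring S] [Algebra k S]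

/-- `[R,S]`: the `k`-span of all commutators `r*s - s*r` with `r ∈ R`, `s ∈ S`. -/
def relCommutator (R : Subalgebra k S) : Submodule k S :=
  Submodule.span k {x : S | ∃ r ∈ R, ∃ s : S, x = r * s - s * r}

/-- `C₀(S,R)`: the span of all twisted trace functions `χ_θ` with `θ ∈ End_R(V)`, `V` ranging
over finite-dimensional `S`-modules. -/
noncomputable def relC0 (R : Subalgebra k S) : Submodule k (Module.Dual k S) :=
  Submodule.span k {f | ∃ (N : FDModule k S) (θ : N.V →ₗ[k] N.V),
    (∀ r ∈ R, ∀ v : N.V, θ (r • v) = r • θ v) ∧ f = twChar N θ}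

/-- `R` is a constrained subalgebra of `S` if `C₀(S,R) = C(S,R)`, where
`C(S,R) = {f ∈ S* : f vanishes on [R,S]}`. -/
def IsConstrainedSubalgebra (R : Subalgebra k S) : Prop :=
  relC0 k S R = (relCommutator k S R).dualAnnihilator

end Paper

namespace Module.End

variable (k V : Type*) [Field k] [AddCommGroup V] [Module k V]

noncomputable def traceForm : Module.End k V →ₗ[k] Module.Dual k (Module.End k V) :=
  (LinearMap.mul k (Module.End k V)).compr₂ (LinearMap.trace k V)

variable {k V}

@[simp]
lemma traceForm_apply (θ φ : Module.End k V) : traceForm k V θ φ = LinearMap.trace k V (θ * φ) :=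
  rfl

lemma trace_mul_commutator (θ a φ : Module.End k V) :
    LinearMap.trace k V (θ * (a * φ - φ * a)) = LinearMap.trace k V ((θ * a - a * θ) * φ) := by
  rw [mul_sub, sub_mul, map_sub, map_sub, ← mul_assoc, ← mul_assoc,
    LinearMap.trace_mul_comm k (θ * φ) a, mul_assoc a]

variable (k V) [FiniteDimensional k V]

lemma traceForm_injective : Function.Injective (traceForm k V) := by
  refine (injective_iff_map_eq_zero _).mpr fun θ hθ => LinearMap.ext fun v => ?_
  refine (Module.forall_dual_apply_eq_zero_iff k _).mp fun f => ?_
  have hcomp : θ * f.smulRight v = f.smulRight (θ v) := by ext; simp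
  simpa [hcomp] using LinearMap.congr_fun hθ (f.smulRight v)

lemma traceForm_surjective : Function.Surjective (traceForm k V) :=
  (LinearMap.injective_iff_surjective_of_finrank_eq_finrank Subspace.dual_finrank_eq.symm).mp
    (traceForm_injective k V)

variable {k V}

lemma traceForm_mem_dualAnnihilator_iff {ι : Type*} (a : ι → Module.End k V) (I : Set ι)
    (θ : Module.End k V) :
    traceForm k V θ ∈
        (Submodule.span k {x | ∃ i ∈ I, ∃ φ, x = a i ∘ₗ φ - φ ∘ₗ a i}).dualAnnihilator ↔
      ∀ i ∈ I, θ ∘ₗ a i = a i ∘ₗ θ := by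
  have hcomm (i : ι) :
      (∀ φ, traceForm k V θ (a i ∘ₗ φ - φ ∘ₗ a i) = 0) ↔ θ ∘ₗ a i = a i ∘ₗ θ := by
    simp only [traceForm_apply, ← mul_eq_comp, trace_mul_commutator, ← sub_eq_zero (a := θ * a i)]
    rw [← (traceForm_injective k V).eq_iff, map_zero, LinearMap.ext_iff]
    rfl
  rw [← SetLike.mem_coe, Submodule.coe_dualAnnihilator_span]
  simp only [Set.ofPred_subset, forall_exists_index, and_imp, Set.mem_ofPred_eq, SetLike.mem_coe,
    LinearMap.mem_ker]
  exact ⟨fun h i hi => (hcomm i).mp fun φ => h _ i hi φ rfl,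
    fun h _ i hi φ hx => hx ▸ (hcomm i).mpr (h i hi) φ⟩

theorem mem_span_commutators_iff {ι : Type*} (a : ι → Module.End k V) (I : Set ι)
    (ψ : Module.End k V) :
    ψ ∈ Submodule.span k {x | ∃ i ∈ I, ∃ φ, x = a i ∘ₗ φ - φ ∘ₗ a i} ↔
      ∀ θ : Module.End k V, (∀ i ∈ I, θ ∘ₗ a i = a i ∘ₗ θ) →
        LinearMap.trace k V (θ ∘ₗ ψ) = 0 := by
  rw [← Subspace.forall_mem_dualAnnihilator_apply_eq_zero_iff]
  refine ⟨fun h θ hθ => h _ ((traceForm_mem_dualAnnihilator_iff a I θ).mpr hθ), fun h f hf => ?_⟩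
  obtain ⟨θ, rfl⟩ := traceForm_surjective k V f
  exact h θ ((traceForm_mem_dualAnnihilator_iff a I θ).mp hf)

end Module.End

namespace Paper

section Characters

variable {k S : Type*} [Field k] [Ring S] [Algebra k S]

lemma twChar_apply (N : FDModule k S) (θ : N.V →ₗ[k] N.V) (s : S) :
    twChar N θ s = LinearMap.trace k N.V (θ ∘ₗ Algebra.lsmul k k N.V s) :=
  rfl

/-- `C₀(S,R;V)` of the paper. -/
noncomputable def relC0Of (R : Subalgebra k S) (N : FDModule k S) :
    Submodule k (Module.Dual k S) :=
  Submodule.span k {f | ∃ θ : N.V →ₗ[k] N.V,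
    (∀ r ∈ R, ∀ v : N.V, θ (r • v) = r • θ v) ∧ f = twChar N θ}

variable (R : Subalgebra k S)

lemma relC0Of_le_relC0 (N : FDModule k S) : relC0Of R N ≤ relC0 k S R :=
  Submodule.span_mono fun _ ⟨θ, hθ, hf⟩ => ⟨N, θ, hθ, hf⟩

lemma relC0_le_dualAnnihilator : relC0 k S R ≤ (relCommutator k S R).dualAnnihilator := by
  refine Submodule.span_le.mpr ?_
  rintro _ ⟨N, θ, hθ, rfl⟩
  rw [SetLike.mem_coe, ← SetLike.mem_coe, relCommutator, Submodule.coe_dualAnnihilator_span]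
  rintro _ ⟨r, hr, s, rfl⟩
  have hcomm : θ * Algebra.lsmul k k N.V r = Algebra.lsmul k k N.V r * θ :=
    LinearMap.ext (hθ r hr)
  rw [SetLike.mem_coe, LinearMap.mem_ker, twChar_apply, ← Module.End.mul_eq_comp,
    map_sub (Algebra.lsmul k k N.V), map_mul (Algebra.lsmul k k N.V),
    map_mul (Algebra.lsmul k k N.V), Module.End.trace_mul_commutator, hcomm, sub_self, zero_mul,
    map_zero]

lemma isConstrainedSubalgebra_iff [FiniteDimensional k S] :
    IsConstrainedSubalgebra k S R ↔ (relC0 k S R).dualCoannihilator ≤ relCommutator k S R := by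
  rw [IsConstrainedSubalgebra, le_antisymm_iff, and_iff_right (relC0_le_dualAnnihilator R)]
  conv_lhs => rw [← Subspace.dualCoannihilator_dualAnnihilator_eq (W := relC0 k S R)]
  exact Subspace.dualAnnihilator_le_dualAnnihilator_iff

lemma lsmul_mem_span_commutators_iff (N : FDModule k S) (s : S) :
    (Algebra.lsmul k k N.V s : N.V →ₗ[k] N.V) ∈
        Submodule.span k {x : N.V →ₗ[k] N.V | ∃ r ∈ R, ∃ φ : N.V →ₗ[k] N.V,
          x = (Algebra.lsmul k k N.V (r : S)) ∘ₗ φ - φ ∘ₗ (Algebra.lsmul k k N.V (r : S))} ↔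
      s ∈ (relC0Of R N).dualCoannihilator := by
  refine (Module.End.mem_span_commutators_iff (fun r : S => Algebra.lsmul k k N.V r) R _).trans ?_
  rw [← SetLike.mem_coe, relC0Of, Submodule.coe_dualCoannihilator_span]
  simp only [Set.mem_ofPred_eq, forall_exists_index, and_imp]
  constructor
  · rintro h _ θ hθ rfl
    exact h θ fun r hr => LinearMap.ext (hθ r hr)
  · exact fun h θ hθ => h _ θ (fun r hr => LinearMap.congr_fun (hθ r hr)) rfl

end Characters

section DirectProduct

variable {k S : Type*} [Field k] [Ring S] [Algebra k S] {ι : Type} [Fintype ι] [DecidableEq ι]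

abbrev FDModule.pi (N : ι → FDModule k S) : FDModule k S where
  V := ∀ i, (N i).V

lemma twChar_pi_single (N : ι → FDModule k S) (i : ι) (θ : (N i).V →ₗ[k] (N i).V) :
    twChar (FDModule.pi N) (LinearMap.single k (fun j => (N j).V) i ∘ₗ θ ∘ₗ LinearMap.proj i) =
      twChar (N i) θ := by
  ext s
  rw [twChar_apply, twChar_apply, LinearMap.comp_assoc, LinearMap.trace_comp_comm']
  congr 1
  ext v
  simp

lemma relC0Of_le_relC0Of_pi (R : Subalgebra k S) (N : ι → FDModule k S) (i : ι) :
    relC0Of R (N i) ≤ relC0Of R (FDModule.pi N) := by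
  refine Submodule.span_le.mpr ?_
  rintro _ ⟨θ, hθ, rfl⟩
  refine Submodule.subset_span ⟨_, fun r hr v => ?_, (twChar_pi_single N i θ).symm⟩
  ext j
  by_cases hj : j = i
  · subst hj
    simpa using hθ r hr (v j)
  · simp [hj]

end DirectProduct

variable {k S : Type*} [Field k] [Ring S] [Algebra k S]

lemma exists_relC0_le_relC0Of [FiniteDimensional k S] (R : Subalgebra k S) :
    ∃ N : FDModule k S, relC0 k S R ≤ relC0Of R N := by
  obtain ⟨f, hf, hspan, -⟩ := Submodule.exists_fun_fin_finrank_span_eq k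
    {f | ∃ (N : FDModule k S) (θ : N.V →ₗ[k] N.V),
      (∀ r ∈ R, ∀ v : N.V, θ (r • v) = r • θ v) ∧ f = twChar N θ}
  choose N θ hθ hfθ using hf
  refine ⟨FDModule.pi N, hspan.symm.trans_le (Submodule.span_le.mpr ?_)⟩
  rintro _ ⟨i, rfl⟩
  exact relC0Of_le_relC0Of_pi R N i (Submodule.subset_span ⟨θ i, hθ i, hfθ i⟩)

end Paper

open Paper in
theorem statement9_general (k S : Type) [Field k] [Ring S] [Algebra k S] [FiniteDimensional k S]
    (R : Subalgebra k S) :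
    IsConstrainedSubalgebra k S R ↔
      ∃ N : FDModule k S, ∀ s : S, (Algebra.lsmul k k N.V s : N.V →ₗ[k] N.V) ∈
          Submodule.span k {x : N.V →ₗ[k] N.V | ∃ r ∈ R, ∃ φ : N.V →ₗ[k] N.V,
            x = (Algebra.lsmul k k N.V (r : S)) ∘ₗ φ - φ ∘ₗ (Algebra.lsmul k k N.V (r : S))} →
        s ∈ relCommutator k S R := by
  simp only [isConstrainedSubalgebra_iff, lsmul_mem_span_commutators_iff]
  constructor
  · intro h
    obtain ⟨N, hN⟩ := exists_relC0_le_relC0Of R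
    exact ⟨N, fun s hs => h (Submodule.dualCoannihilator_anti hN hs)⟩
  · rintro ⟨N, hN⟩ s hs
    exact hN s (Submodule.dualCoannihilator_anti (relC0Of_le_relC0 R N) hs)

open Paper in
/-- Proposition 3.5(ii): `R` is a constrained subalgebra of `S` if and only if there is a
finite-dimensional `S`-module `M` such that every `s ∈ S` whose action `ρ(s)` lies in
`[R, End_k(M)]` belongs to `[R,S]`. -/
theorem statement9 (k S : Type) [Field k] [Ring S] [Algebra k S] [FiniteDimensional k S]
    (hsplit : IsSplitAlgebra k S) (R : Subalgebra k S) :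
    IsConstrainedSubalgebra k S R ↔
      ∃ N : FDModule k S, ∀ s : S, (Algebra.lsmul k k N.V s : N.V →ₗ[k] N.V) ∈
          Submodule.span k {x : N.V →ₗ[k] N.V | ∃ r ∈ R, ∃ φ : N.V →ₗ[k] N.V,
            x = (Algebra.lsmul k k N.V (r : S)) ∘ₗ φ - φ ∘ₗ (Algebra.lsmul k k N.V (r : S))} →
        s ∈ relCommutator k S R :=
  statement9_general k S R
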